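/- arXiv:2211.06920 — 2 statements merged into one kernel-verified Lean document; each statement's English description precedes it below -/
import Mathlib

section
/- Let G=(V,E,w) be a (possibly directed) weighted graph and let G' ⊆ G be an r-missing t-spanner for G. Then for every set P ⊆ V×V of p pairs there exists a subgraph G* ⊆ G with at most |E(G')| + p·r edges such that dist_{G*}(u,v) ≤ t·dist_G(u,v) for every pair (u,v) ∈ P for which v is reachable from u in G. -/
open scoped ENNReal

namespace Hopsets

/-- A weighted directed graph on vertex type `V`: a finite edge set together
with a weight function. -/
structure WDigraph (V : Type) where
  edges : Finset (V × V)
  w : V × V → ℝ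

variable {V : Type}

/-- All edge weights are nonnegative. -/
def WDigraph.Nonneg (G : WDigraph V) : Prop := ∀ e, 0 ≤ G.w e

/-- Edge weights are polynomially bounded (degree `q`) in the number of vertices. -/
def WDigraph.PolyBounded [Fintype V] (G : WDigraph V) (q : ℕ) : Prop :=
  ∀ e ∈ G.edges, G.w e ≤ (Fintype.card V : ℝ) ^ q

/-- `G` encodes an undirected graph: edges come in symmetric pairs of equal weight. -/
def WDigraph.Symmetric (G : WDigraph V) : Prop :=
  ∀ e ∈ G.edges, (e.2, e.1) ∈ G.edges ∧ G.w (e.2, e.1) = G.w e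

/-- `G` is unweighted: every edge has weight `1`. -/
def WDigraph.Unweighted (G : WDigraph V) : Prop := ∀ e, G.w e = 1

/-- `IsWalkFrom G u v l` : the list of edges `l` forms a walk from `u` to `v` in `G`. -/
def IsWalkFrom (G : WDigraph V) : V → V → List (V × V) → Prop
  | u, v, [] => u = v
  | u, v, e :: l => e ∈ G.edges ∧ e.1 = u ∧ IsWalkFrom G e.2 v l

/-- The total weight of a walk, as an extended nonnegative real. -/
noncomputable def walkWeight (G : WDigraph V) (l : List (V × V)) : ℝ≥0∞ :=
  ENNReal.ofReal ((l.map G.w).sum)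

/-- `β`-hop-bounded distance: the infimum weight of a `u`-`v` walk with at most `β` edges. -/
noncomputable def WDigraph.hopDist (G : WDigraph V) (β : ℕ) (u v : V) : ℝ≥0∞ :=
  ⨅ l ∈ {l : List (V × V) | IsWalkFrom G u v l ∧ l.length ≤ β}, walkWeight G l

/-- Distance: infimum weight of a `u`-`v` walk (`∞` if there is none). -/
noncomputable def WDigraph.dist (G : WDigraph V) (u v : V) : ℝ≥0∞ :=
  ⨅ l ∈ {l : List (V × V) | IsWalkFrom G u v l}, walkWeight G l

/-- `v` is reachable from `u` in `G`. -/
def WDigraph.Reachable (G : WDigraph V) (u v : V) : Prop :=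
  ∃ l, IsWalkFrom G u v l

/-- The graph `G ∪ H` obtained by adding the edge set `H`, each added edge `(x,y)`
weighted by `dist_G(x,y)`. -/
noncomputable def WDigraph.augment [DecidableEq V] (G : WDigraph V) (H : Finset (V × V)) :
    WDigraph V where
  edges := G.edges ∪ H
  w := fun e => if e ∈ H then (G.dist e.1 e.2).toReal else G.w e

/-- `H` is a `(β,ε)`-hopset for `G`:
`dist_G(u,v) ≤ dist^{(β)}_{G∪H}(u,v) ≤ (1+ε)·dist_G(u,v)` for all `u, v`. -/
def IsHopset [DecidableEq V] (G : WDigraph V) (β : ℕ) (ε : ℝ) (H : Finset (V × V)) : Prop :=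
  ∀ u v, G.dist u v ≤ (G.augment H).hopDist β u v ∧
    (G.augment H).hopDist β u v ≤ ENNReal.ofReal (1 + ε) * G.dist u v

/-- The subgraph of `G` with edge set `E'` (same weights). -/
def WDigraph.sub (G : WDigraph V) (E' : Finset (V × V)) : WDigraph V :=
  ⟨E', G.w⟩

/-- `E'` (a subgraph of `G`) is an `r`-missing `t`-spanner: for every reachable pair
`(u,v)` there is a `u`-`v` walk in `G` of weight at most `t·dist_G(u,v)` with at most
`r` edges outside `E'`. -/
def IsMissingSpanner [DecidableEq V] (G : WDigraph V) (E' : Finset (V × V))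
    (r : ℕ) (t : ℝ) : Prop :=
  ∀ u v, G.Reachable u v → ∃ l, IsWalkFrom G u v l ∧
    walkWeight G l ≤ ENNReal.ofReal t * G.dist u v ∧
    (l.filter (fun e => decide (e ∉ E'))).length ≤ r

end Hopsets

/-! For each demand pair, fix a walk of stretch at most `t` with at most `r` edges outside
`G'`, as the missing-spanner property provides. Adding these missing edges to `G'` costs at
most `p · r` edges, and afterwards every chosen walk lies entirely in the enlarged subgraph. -/

theorem List.card_toFinset_sdiff_le {α : Type*} [DecidableEq α] (l : List α) (s : Finset α) :
    (l.toFinset \ s).card ≤ (l.filter fun a => decide (a ∉ s)).length := by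
  have : l.toFinset \ s = (l.filter fun a => decide (a ∉ s)).toFinset := by ext; simp
  exact this ▸ List.toFinset_card_le _

namespace Hopsets

variable {V : Type} {G : WDigraph V}

theorem IsWalkFrom.mem_edges :
    ∀ {u v : V} {l : List (V × V)}, IsWalkFrom G u v l → ∀ e ∈ l, e ∈ G.edges
  | _, _, [], _, e, he => absurd he List.not_mem_nil
  | _, _, _ :: _, ⟨ha, _, hl⟩, e, he => by
    rcases List.mem_cons.1 he with rfl | he
    · exact ha
    · exact hl.mem_edges e he

theorem IsWalkFrom.sub {E : Finset (V × V)} :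
    ∀ {u v : V} {l : List (V × V)}, IsWalkFrom G u v l → (∀ e ∈ l, e ∈ E) →
      IsWalkFrom (G.sub E) u v l
  | _, _, [], h, _ => h
  | _, _, a :: _, ⟨_, ha, hl⟩, hE =>
    ⟨hE a List.mem_cons_self, ha, hl.sub fun e he => hE e (List.mem_cons_of_mem a he)⟩

theorem IsWalkFrom.dist_le_walkWeight {u v : V} {l : List (V × V)} (h : IsWalkFrom G u v l) :
    G.dist u v ≤ walkWeight G l :=
  iInf₂_le l h

theorem IsWalkFrom.dist_sub_le_walkWeight {E : Finset (V × V)} {u v : V} {l : List (V × V)}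
    (h : IsWalkFrom G u v l) (hE : ∀ e ∈ l, e ∈ E) : (G.sub E).dist u v ≤ walkWeight G l :=
  (h.sub hE).dist_le_walkWeight

variable [DecidableEq V]

theorem IsMissingSpanner.exists_walk {E' : Finset (V × V)} {r : ℕ} {t : ℝ}
    (hms : IsMissingSpanner G E' r t) (u v : V) :
    ∃ l : List (V × V), (∀ e ∈ l, e ∈ G.edges) ∧
      (l.filter fun e => decide (e ∉ E')).length ≤ r ∧
      (G.Reachable u v → IsWalkFrom G u v l ∧ walkWeight G l ≤ ENNReal.ofReal t * G.dist u v) := by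
  by_cases huv : G.Reachable u v
  · obtain ⟨l, hl, hw, hr⟩ := hms u v huv
    exact ⟨l, hl.mem_edges, hr, fun _ => ⟨hl, hw⟩⟩
  · exact ⟨[], by simp, by simp, fun h => absurd h huv⟩

end Hopsets

open Hopsets in
theorem stmt_1_general {V : Type} [DecidableEq V]
    (G : WDigraph V)
    (E' : Finset (V × V)) (hE'sub : E' ⊆ G.edges)
    (r : ℕ) (t : ℝ)
    (hms : IsMissingSpanner G E' r t)
    (P : Finset (V × V)) (p : ℕ) (hp : P.card = p) :
    ∃ Estar ⊆ G.edges,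
      Estar.card ≤ E'.card + p * r ∧
      ∀ uv ∈ P, G.Reachable uv.1 uv.2 →
        (G.sub Estar).dist uv.1 uv.2 ≤ ENNReal.ofReal t * G.dist uv.1 uv.2 := by
  choose L hLedges hLmissing hLspan using fun uv : V × V => hms.exists_walk uv.1 uv.2
  refine ⟨E' ∪ P.biUnion fun uv => (L uv).toFinset \ E', ?_, ?_, ?_⟩
  · refine Finset.union_subset hE'sub (Finset.biUnion_subset.2 fun uv _ e he => ?_)
    exact hLedges uv e (List.mem_toFinset.1 (Finset.mem_sdiff.1 he).1)
  · calc _ ≤ E'.card + (P.biUnion fun uv => (L uv).toFinset \ E').card := Finset.card_union_le _ _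
      _ ≤ E'.card + P.card * r := by
        gcongr
        exact Finset.card_biUnion_le_card_mul _ _ _ fun uv _ =>
          ((L uv).card_toFinset_sdiff_le E').trans (hLmissing uv)
      _ = E'.card + p * r := by rw [hp]
  · intro uv huv hreach
    obtain ⟨hwalk, hweight⟩ := hLspan uv hreach
    refine (hwalk.dist_sub_le_walkWeight fun e he => ?_).trans hweight
    by_cases heE' : e ∈ E'
    · exact Finset.mem_union_left _ heE'
    · exact Finset.mem_union_right _ <| Finset.mem_biUnion.2
        ⟨uv, huv, Finset.mem_sdiff.2 ⟨List.mem_toFinset.2 he, heE'⟩⟩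

open Hopsets in
/-- From an `r`-missing `t`-spanner `G' ⊆ G` and any set `P` of `p`
demand pairs, one gets a subgraph `G* ⊆ G` with at most `|E(G')| + p·r` edges such
that `dist_{G*}(u,v) ≤ t·dist_G(u,v)` for every pair `(u,v) ∈ P` with `v` reachable
from `u` in `G`. -/
theorem stmt_1 {V : Type} [Fintype V] [DecidableEq V]
    (G : WDigraph V) (hG : G.Nonneg)
    (E' : Finset (V × V)) (hE'sub : E' ⊆ G.edges)
    (r : ℕ) (t : ℝ) (ht : 1 ≤ t)
    (hms : IsMissingSpanner G E' r t)
    (P : Finset (V × V)) (p : ℕ) (hp : P.card = p) :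
    ∃ Estar ⊆ G.edges,
      Estar.card ≤ E'.card + p * r ∧
      ∀ uv ∈ P, G.Reachable uv.1 uv.2 →
        (G.sub Estar).dist uv.1 uv.2 ≤ ENNReal.ofReal t * G.dist uv.1 uv.2 :=
  stmt_1_general G E' hE'sub r t hms P p hp
end

section
/- For every ε ∈ (0,1), every integer k ≥ 1, and every δ > 0 there exists n_0 such that for all n ≥ n_0 and every n-vertex undirected graph G with nonnegative, polynomially bounded edge weights, there exists a subgraph G* ⊆ G with at most n^{1+δ} + (1/ε)^{1+1/k}·n^δ edges that is an ε-slack (12k−1+δ)-spanner of G. -/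
open scoped ENNReal

namespace Hopsets

/-- `E'` (a subgraph of `G`) is an `ε`-slack `t`-spanner: for every vertex `v` there
is a set `S` of at least `(1−ε)n` vertices, all at least as far from `v` as every
vertex outside `S`, such that every `w ∈ S` satisfies
`dist_{G'}(v,w) ≤ t·dist_G(v,w)`. -/
def IsSlackSpanner {V : Type} [Fintype V] [DecidableEq V]
    (G : WDigraph V) (E' : Finset (V × V)) (ε t : ℝ) : Prop :=
  ∀ v : V, ∃ S : Finset V,
    (1 - ε) * (Fintype.card V : ℝ) ≤ (S.card : ℝ) ∧
    (∀ x ∈ S, ∀ y ∉ S, G.dist v y ≤ G.dist v x) ∧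
    ∀ w ∈ S, (G.sub E').dist v w ≤ ENNReal.ofReal t * G.dist v w

end Hopsets

/-!
Put `m = ⌊εn⌋`, and let `B v` be a set of `m` vertices nearest to `v`, of radius `r v`.
Choosing centres greedily by increasing radius gives a set `A` of centres with pairwise
disjoint balls, so `|A| ≤ n / m`, such that every ball `B v` meets the ball of some centre `a`
with `r a ≤ r v`. Take the union of shortest-path trees rooted at the centres: it has at most
`2n|A| ≤ 4n/ε ≤ n^(1+δ)` edges. For `w ∉ B v` we have `d(v,w) ≥ r v` and `d(a,v) ≤ 2 r v`, so
the route `v → a → w` through the tree of `a` has length at most `5 d(v,w) ≤ (12k - 1 + δ) d(v,w)`.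
-/

namespace Hopsets

variable {V : Type} {G : WDigraph V} {u v w : V} {l l₁ l₂ : List (V × V)}

namespace IsWalkFrom

lemma append (h₁ : IsWalkFrom G u v l₁) (h₂ : IsWalkFrom G v w l₂) :
    IsWalkFrom G u w (l₁ ++ l₂) := by
  induction l₁ generalizing u with
  | nil => exact (show u = v from h₁) ▸ h₂
  | cons e l ih => exact ⟨h₁.1, h₁.2.1, ih h₁.2.2⟩

lemma mem_edges_s15 (h : IsWalkFrom G u v l) : ∀ e ∈ l, e ∈ G.edges := by
  induction l generalizing u with
  | nil => simp
  | cons f l ih => exact List.forall_mem_cons.2 ⟨h.1, ih h.2.2⟩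

lemma mono {H : WDigraph V} (hGH : G.edges ⊆ H.edges) (h : IsWalkFrom G u v l) :
    IsWalkFrom H u v l := by
  induction l generalizing u with
  | nil => exact h
  | cons e l ih => exact ⟨hGH h.1, h.2.1, ih h.2.2⟩

lemma reverse (hsym : G.Symmetric) (h : IsWalkFrom G u v l) :
    IsWalkFrom G v u (l.reverse.map Prod.swap) := by
  induction l generalizing u with
  | nil => exact (show u = v from h).symm
  | cons e l ih =>
    rw [List.reverse_cons, List.map_append]
    exact (ih h.2.2).append ⟨(hsym e h.1).1, rfl, h.2.1⟩

end IsWalkFrom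

lemma isWalkFrom_append_singleton_iff {e : V × V} :
    IsWalkFrom G u v (l ++ [e]) ↔ IsWalkFrom G u e.1 l ∧ e ∈ G.edges ∧ e.2 = v := by
  induction l generalizing u with
  | nil => exact ⟨fun h => ⟨h.2.1.symm, h.1, h.2.2⟩, fun h => ⟨h.2.1, h.1.symm, h.2.2⟩⟩
  | cons f l ih => simp only [List.cons_append, IsWalkFrom, ih, and_assoc]

lemma walkWeight_sub (E : Finset (V × V)) (l : List (V × V)) :
    walkWeight (G.sub E) l = walkWeight G l := rfl

lemma walkWeight_singleton (e : V × V) : walkWeight G [e] = ENNReal.ofReal (G.w e) := by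
  simp [walkWeight]

lemma walkWeight_append (hnn : G.Nonneg) (l₁ l₂ : List (V × V)) :
    walkWeight G (l₁ ++ l₂) = walkWeight G l₁ + walkWeight G l₂ := by
  have hsum : ∀ l : List (V × V), 0 ≤ (l.map G.w).sum :=
    fun l => List.sum_nonneg fun x hx => by
      obtain ⟨e, -, rfl⟩ := List.mem_map.1 hx
      exact hnn e
  rw [walkWeight, List.map_append, List.sum_append, ENNReal.ofReal_add (hsum l₁) (hsum l₂)]
  rfl

lemma walkWeight_reverse (hsym : G.Symmetric) (h : IsWalkFrom G u v l) :
    walkWeight G (l.reverse.map Prod.swap) = walkWeight G l := by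
  have hw : ∀ e ∈ l, G.w e.swap = G.w e := fun e he => (hsym e (h.mem_edges_s15 e he)).2
  simp only [walkWeight, List.map_map, List.map_reverse, List.sum_reverse]
  exact congrArg _ (congrArg _ (List.map_congr_left hw))

namespace WDigraph

lemma dist_le_walkWeight (h : IsWalkFrom G u v l) : G.dist u v ≤ walkWeight G l :=
  iInf₂_le l h

lemma dist_le_weight {e : V × V} (he : e ∈ G.edges) : G.dist e.1 e.2 ≤ ENNReal.ofReal (G.w e) :=
  walkWeight_singleton (G := G) e ▸ dist_le_walkWeight ⟨he, rfl, rfl⟩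

lemma dist_self (G : WDigraph V) (v : V) : G.dist v v = 0 :=
  le_antisymm (by simpa [walkWeight] using dist_le_walkWeight (G := G) (l := []) rfl) zero_le

lemma dist_eq_top_of_not_reachable (h : ¬ G.Reachable u v) : G.dist u v = ⊤ :=
  le_antisymm le_top (le_iInf₂ fun l hl => (h ⟨l, hl⟩).elim)

lemma dist_comm (hsym : G.Symmetric) (u v : V) : G.dist u v = G.dist v u := by
  have key : ∀ a b : V, G.dist b a ≤ G.dist a b := fun a b => le_iInf₂ fun l hl =>
    walkWeight_reverse hsym hl ▸ dist_le_walkWeight (hl.reverse hsym)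
  exact le_antisymm (key v u) (key u v)

lemma dist_sub_anti {E F : Finset (V × V)} (hEF : E ⊆ F) (u v : V) :
    (G.sub F).dist u v ≤ (G.sub E).dist u v :=
  le_iInf₂ fun _ hl => dist_le_walkWeight (hl.mono hEF)

end WDigraph

def IsShortestWalk (G : WDigraph V) (u v : V) (l : List (V × V)) : Prop :=
  IsWalkFrom G u v l ∧ walkWeight G l = G.dist u v

lemma IsWalkFrom.exists_suffix (h : IsWalkFrom G u v l) (hw : w ∈ u :: l.map Prod.snd) :
    ∃ p s, l = p ++ s ∧ IsWalkFrom G w v s ∧ (w :: s.map Prod.snd) <:+ (u :: l.map Prod.snd) := by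
  induction l generalizing u with
  | nil =>
    obtain rfl := List.mem_singleton.1 hw
    exact ⟨[], [], rfl, h, List.suffix_refl _⟩
  | cons e l ih =>
    by_cases hwu : w = u
    · exact ⟨[], e :: l, rfl, hwu ▸ h, hwu ▸ List.suffix_refl _⟩
    obtain ⟨p, s, rfl, hs, hsuf⟩ := ih h.2.2 (by simpa [hwu] using hw)
    exact ⟨e :: p, s, rfl, hs, hsuf.trans (List.suffix_cons _ _)⟩

lemma IsWalkFrom.exists_nodup (hnn : G.Nonneg) (h : IsWalkFrom G u v l) :
    ∃ l', IsWalkFrom G u v l' ∧ walkWeight G l' ≤ walkWeight G l ∧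
      (u :: l'.map Prod.snd).Nodup := by
  induction l generalizing u with
  | nil => exact ⟨[], h, le_rfl, by simp⟩
  | cons e l ih =>
    obtain ⟨l', hl', hwt, hnd⟩ := ih h.2.2
    have hcons : ∀ l : List (V × V), walkWeight G (e :: l) = walkWeight G [e] + walkWeight G l :=
      fun l => walkWeight_append hnn [e] l
    by_cases hu : u ∈ e.2 :: l'.map Prod.snd
    · obtain ⟨p, s, rfl, hs, hsuf⟩ := hl'.exists_suffix hu
      refine ⟨s, hs, ?_, hsuf.sublist.nodup hnd⟩
      calc walkWeight G s ≤ walkWeight G (p ++ s) := by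
            rw [walkWeight_append hnn]; exact le_add_self
        _ ≤ walkWeight G l := hwt
        _ ≤ walkWeight G (e :: l) := by rw [hcons]; exact le_add_self
    · refine ⟨e :: l', ⟨h.1, h.2.1, hl'⟩, ?_, List.nodup_cons.2 ⟨hu, hnd⟩⟩
      rw [hcons l', hcons l]
      exact add_le_add_right hwt _

section Shortest

variable [Fintype V]

lemma exists_isShortestWalk (hnn : G.Nonneg) (h : G.Reachable u v) :
    ∃ l, IsShortestWalk G u v l := by
  have hfin : {l | IsWalkFrom G u v l ∧ (u :: l.map Prod.snd).Nodup}.Finite :=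
    (List.finite_length_le (V × V) (Fintype.card V)).subset fun l hl => by
      have := hl.2.length_le_card
      simp only [List.length_cons, List.length_map] at this
      exact (Nat.le_succ _).trans this
  obtain ⟨l₀, hl₀⟩ := h
  obtain ⟨l, ⟨hl, -⟩, hmin⟩ := Set.exists_min_image _ (walkWeight G) hfin
    (let ⟨l, hl, _, hnd⟩ := hl₀.exists_nodup hnn; ⟨l, hl, hnd⟩)
  refine ⟨l, hl, le_antisymm (le_iInf₂ fun l' hl' => ?_) (WDigraph.dist_le_walkWeight hl)⟩
  obtain ⟨l'', hl'', hle, hnd⟩ := hl'.exists_nodup hnn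
  exact (hmin l'' ⟨hl'', hnd⟩).trans hle

lemma exists_isShortestWalk_forall_length_le (hnn : G.Nonneg) (h : G.Reachable u v) :
    ∃ l, IsShortestWalk G u v l ∧ ∀ l', IsShortestWalk G u v l' → l.length ≤ l'.length := by
  classical
  have hex : ∃ n, ∃ l, IsShortestWalk G u v l ∧ l.length = n :=
    let ⟨l, hl⟩ := exists_isShortestWalk hnn h; ⟨_, l, hl, rfl⟩
  obtain ⟨l, hl, hlen⟩ := Nat.find_spec hex
  exact ⟨l, hl, fun l' hl' => hlen ▸ Nat.find_min' hex ⟨l', hl', rfl⟩⟩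

lemma WDigraph.dist_triangle (hnn : G.Nonneg) (u v w : V) :
    G.dist u w ≤ G.dist u v + G.dist v w := by
  by_cases h₁ : G.Reachable u v
  · by_cases h₂ : G.Reachable v w
    · obtain ⟨l₁, hw₁, hd₁⟩ := exists_isShortestWalk hnn h₁
      obtain ⟨l₂, hw₂, hd₂⟩ := exists_isShortestWalk hnn h₂
      calc G.dist u w ≤ walkWeight G (l₁ ++ l₂) := WDigraph.dist_le_walkWeight (hw₁.append hw₂)
        _ = G.dist u v + G.dist v w := by rw [walkWeight_append hnn, hd₁, hd₂]
    · simp [WDigraph.dist_eq_top_of_not_reachable h₂]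
  · simp [WDigraph.dist_eq_top_of_not_reachable h₁]

lemma IsShortestWalk.of_append_singleton (hnn : G.Nonneg) {e : V × V}
    (h : IsShortestWalk G u v (l ++ [e])) : IsShortestWalk G u e.1 l := by
  obtain ⟨hl, he, rfl⟩ := isWalkFrom_append_singleton_iff.1 h.1
  refine ⟨hl, le_antisymm ?_ (WDigraph.dist_le_walkWeight hl)⟩
  have : walkWeight G l + ENNReal.ofReal (G.w e) ≤ G.dist u e.1 + ENNReal.ofReal (G.w e) :=
    calc walkWeight G l + ENNReal.ofReal (G.w e) = G.dist u e.2 := by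
          rw [← h.2, walkWeight_append hnn, walkWeight_singleton]
      _ ≤ G.dist u e.1 + G.dist e.1 e.2 := WDigraph.dist_triangle hnn _ _ _
      _ ≤ G.dist u e.1 + ENNReal.ofReal (G.w e) := add_le_add_right (WDigraph.dist_le_weight he) _
  exact (ENNReal.add_le_add_iff_right ENNReal.ofReal_ne_top).1 this

end Shortest

lemma IsWalkFrom.exists_eq_append_singleton (h : IsWalkFrom G u v l) (hvu : v ≠ u) :
    ∃ p e, l = p ++ [e] :=
  l.eq_nil_or_concat'.resolve_left fun hl => by
    subst hl
    exact hvu (h : u = v).symm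

-- Choosing shortest walks of minimal hop count makes the last edges `T` form a tree:
-- the prefix of `P v` is a shortest walk with fewer hops, so strong induction on hops works.
lemma dist_sub_le_of_lastEdge_mem [Fintype V] (hnn : G.Nonneg) {a : V} {P : V → List (V × V)}
    {T : Finset (V × V)} (hP : ∀ v, G.Reachable a v → IsShortestWalk G a v (P v))
    (hPmin : ∀ v, G.Reachable a v → ∀ l, IsShortestWalk G a v l → (P v).length ≤ l.length)
    (hT : ∀ v p e, G.Reachable a v → v ≠ a → P v = p ++ [e] → e ∈ T) (v : V) :
    (G.sub T).dist a v ≤ G.dist a v := by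
  by_cases hv : G.Reachable a v
  swap
  · simp [WDigraph.dist_eq_top_of_not_reachable hv]
  have hnnT : (G.sub T).Nonneg := hnn
  induction hN : (P v).length using Nat.strong_induction_on generalizing v with
  | _ N ih =>
    by_cases hva : v = a
    · simp [hva, WDigraph.dist_self]
    obtain ⟨p, e, hpe⟩ := (hP v hv).1.exists_eq_append_singleton hva
    have hp : IsShortestWalk G a e.1 p := (hpe ▸ hP v hv).of_append_singleton hnn
    have he2 : e.2 = v := (isWalkFrom_append_singleton_iff.1 (hpe ▸ (hP v hv).1)).2.2
    have hu : (G.sub T).dist a e.1 ≤ G.dist a e.1 := by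
      refine ih _ ?_ e.1 ⟨p, hp.1⟩ rfl
      have := hPmin e.1 ⟨p, hp.1⟩ p hp
      rw [← hN, hpe, List.length_append, List.length_singleton]
      omega
    calc (G.sub T).dist a v ≤ (G.sub T).dist a e.1 + (G.sub T).dist e.1 e.2 :=
          he2 ▸ WDigraph.dist_triangle hnnT _ _ _
      _ ≤ G.dist a e.1 + ENNReal.ofReal (G.w e) :=
          add_le_add hu (WDigraph.dist_le_weight (G := G.sub T) (hT v p e hv hva hpe))
      _ = G.dist a v := by
          rw [← hp.2, ← walkWeight_singleton, ← walkWeight_append hnn, ← hpe, (hP v hv).2]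

lemma exists_shortestPathTree [Fintype V] (hnn : G.Nonneg) (a : V) :
    ∃ T ⊆ G.edges, T.card ≤ Fintype.card V ∧ ∀ v, (G.sub T).dist a v ≤ G.dist a v := by
  classical
  choose! P hP hPmin using
    fun v (hv : G.Reachable a v) => exists_isShortestWalk_forall_length_le hnn hv
  refine ⟨(Finset.univ.filter fun v => G.Reachable a v ∧ v ≠ a).image
    fun v => (P v).getLastD (a, a), ?_, Finset.card_image_le.trans (Finset.card_le_univ _),
    dist_sub_le_of_lastEdge_mem hnn hP hPmin fun v p e hv hva hpe =>
      Finset.mem_image.2 ⟨v, by simp [hv, hva], by simp [hpe]⟩⟩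
  intro e he
  obtain ⟨v, hv, rfl⟩ := Finset.mem_image.1 he
  rw [Finset.mem_filter] at hv
  obtain ⟨p, e, hpe⟩ := (hP v hv.2.1).1.exists_eq_append_singleton hv.2.2
  simpa [hpe] using (isWalkFrom_append_singleton_iff.1 (hpe ▸ (hP v hv.2.1).1)).2.1

lemma exists_card_eq_forall_le_of_notMem {α β : Type*} [Fintype α] [DecidableEq α]
    [LinearOrder β] (f : α → β) {m : ℕ} (hm : m ≤ Fintype.card α) :
    ∃ B : Finset α, B.card = m ∧ ∀ x ∈ B, ∀ y ∉ B, f x ≤ f y := by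
  induction m with
  | zero => exact ⟨∅, rfl, by simp⟩
  | succ m ih =>
    obtain ⟨B, hcard, hB⟩ := ih (Nat.le_of_succ_le hm)
    obtain ⟨y₀, hy₀, hy₀min⟩ := Bᶜ.exists_min_image f
      (Finset.card_pos.1 (by rw [Finset.card_compl, hcard]; omega))
    rw [Finset.mem_compl] at hy₀
    refine ⟨insert y₀ B, by rw [Finset.card_insert_of_notMem hy₀, hcard], fun x hx y hy => ?_⟩
    rw [Finset.mem_insert, not_or] at hy
    rcases Finset.mem_insert.1 hx with rfl | hx
    · exact hy₀min y (Finset.mem_compl.2 hy.2)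
    · exact hB x hx y hy.2

lemma exists_pairwiseDisjoint_cover {ι β α : Type*} [LinearOrder α]
    (B : ι → Finset β) (r : ι → α) (hB : ∀ i, (B i).Nonempty) (U : Finset ι) :
    ∃ A ⊆ U, (A : Set ι).PairwiseDisjoint B ∧
      ∀ i ∈ U, ∃ a ∈ A, ¬ Disjoint (B a) (B i) ∧ r a ≤ r i := by
  classical
  induction U using Finset.strongInduction with
  | H U ih =>
    rcases U.eq_empty_or_nonempty with rfl | hU
    · exact ⟨∅, subset_rfl, by simp, by simp⟩
    obtain ⟨u, huU, humin⟩ := U.exists_min_image r hU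
    have hfilter : U.filter (fun i => Disjoint (B i) (B u)) ⊂ U :=
      Finset.filter_ssubset.2 ⟨u, huU, by simpa using (hB u).ne_empty⟩
    obtain ⟨A, hAU, hAdisj, hAcov⟩ := ih _ hfilter
    refine ⟨insert u A, Finset.insert_subset huU (hAU.trans hfilter.subset), ?_, fun i hi => ?_⟩
    · rw [Finset.coe_insert]
      exact hAdisj.insert fun a ha _ => (Finset.mem_filter.1 (hAU ha)).2.symm
    · by_cases hiu : Disjoint (B i) (B u)
      · obtain ⟨a, ha, hcov⟩ := hAcov i (Finset.mem_filter.2 ⟨hi, hiu⟩)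
        exact ⟨a, Finset.mem_insert_of_mem ha, hcov⟩
      · exact ⟨u, Finset.mem_insert_self _ _, fun h => hiu h.symm, humin i hi⟩

def swapClosure [DecidableEq V] (E : Finset (V × V)) : Finset (V × V) := E ∪ E.image Prod.swap

section SwapClosure

variable [DecidableEq V] {E : Finset (V × V)}

lemma subset_swapClosure : E ⊆ swapClosure E := Finset.subset_union_left

lemma swap_mem_swapClosure {e : V × V} (he : e ∈ swapClosure E) : (e.2, e.1) ∈ swapClosure E := by
  rcases Finset.mem_union.1 he with he | he
  · exact Finset.mem_union_right _ (Finset.mem_image_of_mem _ he)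
  · obtain ⟨f, hf, rfl⟩ := Finset.mem_image.1 he
    exact Finset.mem_union_left _ hf

lemma swapClosure_subset_edges (hsym : G.Symmetric) (hE : E ⊆ G.edges) :
    swapClosure E ⊆ G.edges :=
  Finset.union_subset hE fun _ he =>
    let ⟨f, hf, hfe⟩ := Finset.mem_image.1 he; hfe ▸ (hsym f (hE hf)).1

lemma card_swapClosure_le : (swapClosure E).card ≤ 2 * E.card :=
  (Finset.card_union_le _ _).trans (by have := E.card_image_le (f := Prod.swap); omega)

end SwapClosure

lemma WDigraph.dist_sub_le_five_mul [Fintype V] (hsym : G.Symmetric) (hnn : G.Nonneg)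
    {E : Finset (V × V)} (hEsym : (G.sub E).Symmetric) {a v w z : V} {ρ : ℝ≥0∞}
    (htree : ∀ x, (G.sub E).dist a x ≤ G.dist a x)
    (hvz : G.dist v z ≤ ρ) (haz : G.dist a z ≤ ρ) (hρ : ρ ≤ G.dist v w) :
    (G.sub E).dist v w ≤ 5 * G.dist v w := by
  have hnnE : (G.sub E).Nonneg := hnn
  have hav : G.dist a v ≤ 2 * G.dist v w :=
    calc G.dist a v ≤ G.dist a z + G.dist z v := dist_triangle hnn _ _ _
      _ ≤ ρ + ρ := add_le_add haz (dist_comm hsym z v ▸ hvz)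
      _ ≤ 2 * G.dist v w := by rw [← two_mul]; gcongr
  calc (G.sub E).dist v w ≤ (G.sub E).dist v a + (G.sub E).dist a w := dist_triangle hnnE _ _ _
    _ = (G.sub E).dist a v + (G.sub E).dist a w := by rw [dist_comm hEsym v a]
    _ ≤ G.dist a v + (G.dist a v + G.dist v w) :=
        add_le_add (htree v) ((htree w).trans (dist_triangle hnn a v w))
    _ ≤ 2 * G.dist v w + (2 * G.dist v w + G.dist v w) := by gcongr
    _ = 5 * G.dist v w := by ring

theorem exists_five_spanner [Fintype V] [DecidableEq V] (hsym : G.Symmetric) (hnn : G.Nonneg)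
    {m : ℕ} (hm : 0 < m) (hmn : m ≤ Fintype.card V) :
    ∃ E ⊆ G.edges, (∀ e ∈ E, (e.2, e.1) ∈ E) ∧
      E.card * m ≤ 2 * Fintype.card V * Fintype.card V ∧
      ∀ v, ∃ S : Finset V, S.card = Fintype.card V - m ∧
        (∀ x ∈ S, ∀ y ∉ S, G.dist v y ≤ G.dist v x) ∧
        ∀ w ∈ S, (G.sub E).dist v w ≤ 5 * G.dist v w := by
  choose B hBcard hBle using fun v => exists_card_eq_forall_le_of_notMem (G.dist v) hmn
  obtain ⟨A, -, hAdisj, hAcov⟩ := exists_pairwiseDisjoint_cover B (fun v => (B v).sup (G.dist v))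
    (fun v => Finset.card_pos.1 (hBcard v ▸ hm)) Finset.univ
  choose T hTG hTcard hT using fun a => exists_shortestPathTree hnn (G := G) a
  have hAcard : A.card * m ≤ Fintype.card V :=
    calc A.card * m = ∑ a ∈ A, (B a).card := by simp [hBcard, mul_comm]
      _ = (A.biUnion B).card := (Finset.card_biUnion hAdisj).symm
      _ ≤ Fintype.card V := Finset.card_le_univ _
  have hTAcard : (A.biUnion T).card ≤ A.card * Fintype.card V :=
    Finset.card_biUnion_le.trans (Finset.sum_le_card_nsmul _ _ _ fun a _ => hTcard a)
  have hEG : swapClosure (A.biUnion T) ⊆ G.edges :=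
    swapClosure_subset_edges hsym (Finset.biUnion_subset.2 fun a _ => hTG a)
  refine ⟨swapClosure (A.biUnion T), hEG, fun e => swap_mem_swapClosure, ?_, fun v => ?_⟩
  · calc (swapClosure (A.biUnion T)).card * m ≤ 2 * (A.card * Fintype.card V) * m := by
          gcongr; exact card_swapClosure_le.trans (by omega)
      _ = 2 * Fintype.card V * (A.card * m) := by ring
      _ ≤ 2 * Fintype.card V * Fintype.card V := by gcongr
  refine ⟨(B v)ᶜ, by rw [Finset.card_compl, hBcard], fun x hx y hy => ?_, fun w hw => ?_⟩
  · exact hBle v y (Finset.notMem_compl.1 hy) x (Finset.mem_compl.1 hx)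
  obtain ⟨a, ha, hav, hr⟩ := hAcov v (Finset.mem_univ v)
  obtain ⟨z, hza, hzv⟩ := Finset.not_disjoint_iff.1 hav
  refine WDigraph.dist_sub_le_five_mul hsym hnn
    (fun e he => ⟨swap_mem_swapClosure he, (hsym e (hEG he)).2⟩) (a := a) (z := z)
    (fun x => (WDigraph.dist_sub_anti ?_ a x).trans (hT a x)) (Finset.le_sup hzv)
    ((Finset.le_sup hza).trans hr) (Finset.sup_le fun y hy => hBle v y hy w (Finset.mem_compl.1 hw))
  exact (Finset.subset_biUnion_of_mem T ha).trans subset_swapClosure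

lemma IsSlackSpanner.mono [Fintype V] [DecidableEq V] {E : Finset (V × V)} {ε t t' : ℝ}
    (h : IsSlackSpanner G E ε t) (ht : t ≤ t') : IsSlackSpanner G E ε t' := fun v =>
  let ⟨S, hcard, hfar, hS⟩ := h v
  ⟨S, hcard, hfar, fun w hw => (hS w hw).trans (by gcongr)⟩

theorem exists_isSlackSpanner_five [Fintype V] [DecidableEq V] (hsym : G.Symmetric)
    (hnn : G.Nonneg) {ε : ℝ} (hε : 0 < ε) (hε1 : ε ≤ 1) (hεn : 2 ≤ ε * Fintype.card V) :
    ∃ E ⊆ G.edges, (∀ e ∈ E, (e.2, e.1) ∈ E) ∧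
      (E.card : ℝ) ≤ 4 * Fintype.card V / ε ∧ IsSlackSpanner G E ε 5 := by
  set n := Fintype.card V
  set m := ⌊ε * n⌋₊
  have hm : (m : ℝ) ≤ ε * n := Nat.floor_le (by positivity)
  -- `εn ≥ 2` makes the rounding loss at most half of `εn`
  have hm2 : ε * n / 2 ≤ m := by linarith [Nat.lt_floor_add_one (ε * n)]
  have hmn : m ≤ n := by
    have : ε * n ≤ n := mul_le_of_le_one_left n.cast_nonneg hε1
    exact_mod_cast hm.trans this
  obtain ⟨E, hEG, hEsym, hEcard, hE⟩ :=
    exists_five_spanner hsym hnn (Nat.floor_pos.2 (by linarith)) hmn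
  refine ⟨E, hEG, hEsym, ?_, fun v => ?_⟩
  · have hEm : (E.card : ℝ) * m ≤ 2 * n * n := by exact_mod_cast hEcard
    rw [le_div_iff₀ hε]
    nlinarith [E.card.cast_nonneg (α := ℝ)]
  · obtain ⟨S, hS, hfar, hstretch⟩ := hE v
    refine ⟨S, by rw [hS, Nat.cast_sub hmn]; linarith, hfar, fun w hw => ?_⟩
    simpa using hstretch w hw

lemma eventually_two_le_mul_and_div_le_rpow {ε δ : ℝ} (hε : 0 < ε) (hδ : 0 < δ) :
    ∀ᶠ n : ℕ in Filter.atTop, 2 ≤ ε * n ∧ 4 * n / ε ≤ (n : ℝ) ^ (1 + δ) := by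
  have h₁ := ((tendsto_natCast_atTop_atTop (R := ℝ)).const_mul_atTop hε).eventually_ge_atTop 2
  have h₂ := ((tendsto_rpow_atTop hδ).comp tendsto_natCast_atTop_atTop).eventually_ge_atTop (4 / ε)
  filter_upwards [h₁, h₂] with n h₁ h₂
  refine ⟨h₁, ?_⟩
  have hn : (0 : ℝ) < n := by nlinarith
  rw [Real.rpow_add hn, Real.rpow_one, div_le_iff₀ hε]
  rw [Function.comp_apply, div_le_iff₀ hε] at h₂
  nlinarith

end Hopsets

open Hopsets in
/-- For every `ε ∈ (0,1)`, integer `k ≥ 1` and `δ > 0`, for all large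
enough `n`, every `n`-vertex undirected graph with nonnegative polynomially bounded
weights admits an `ε`-slack `(12k−1+δ)`-spanner with at most
`n^{1+δ} + (1/ε)^{1+1/k}·n^δ` edges. -/
theorem stmt_15 (ε : ℝ) (hε : ε ∈ Set.Ioo (0 : ℝ) 1) (k : ℕ) (hk : 1 ≤ k)
    (δ : ℝ) (hδ : 0 < δ) (q : ℕ) :
    ∃ n0 : ℕ, ∀ n ≥ n0, ∀ G : WDigraph (Fin n),
      G.Symmetric → G.Nonneg → G.PolyBounded q →
      ∃ Estar ⊆ G.edges, (∀ e ∈ Estar, (e.2, e.1) ∈ Estar) ∧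
        (Estar.card : ℝ) ≤ (n : ℝ) ^ (1 + δ) + (1 / ε) ^ (1 + 1 / (k : ℝ)) * (n : ℝ) ^ δ ∧
        IsSlackSpanner G Estar ε (12 * (k : ℝ) - 1 + δ) := by
  obtain ⟨n0, hn0⟩ := Filter.eventually_atTop.1 (eventually_two_le_mul_and_div_le_rpow hε.1 hδ)
  refine ⟨n0, fun n hn G hsym hnn _ => ?_⟩
  obtain ⟨hεn, hcard⟩ := hn0 n hn
  obtain ⟨E, hEG, hEsym, hEcard, hE⟩ := exists_isSlackSpanner_five hsym hnn hε.1 hε.2.le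
    (by simpa using hεn)
  rw [Fintype.card_fin] at hEcard
  refine ⟨E, hEG, hEsym, ?_, hE.mono ?_⟩
  · have hε0 := hε.1
    have : 0 ≤ (1 / ε) ^ (1 + 1 / (k : ℝ)) * (n : ℝ) ^ δ := by positivity
    linarith
  · have : (1 : ℝ) ≤ k := by exact_mod_cast hk
    linarith
end
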